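/- arXiv:1506.07431 — 5 statements merged into one kernel-verified Lean document; each statement's English description precedes it below -/
import Mathlib

section
/- Let X be a real Banach space, A : X → X a bounded linear operator, and c ∈ ℝ a constant such that ‖A − c·I‖ < 1 + c (operator norm). Then for every t ∈ [0,1] the operator I + t²·A is invertible in the Banach algebra of bounded operators on X. -/
theorem isUnit_algebraMap_add_of_norm_lt {𝕜 A : Type*} [NormedField 𝕜] [NormedRing A]
    [NormedAlgebra 𝕜 A] [CompleteSpace A] {k : 𝕜} {b : A} (h : ‖b‖ < ‖k‖) :
    IsUnit (algebraMap 𝕜 A k + b) := by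
  have hk : k ≠ 0 := norm_pos_iff.mp ((norm_nonneg b).trans_lt h)
  have hsmall : ‖-(k⁻¹ • b)‖ < 1 := by
    rwa [norm_neg, norm_smul, norm_inv, inv_mul_lt_one₀ (norm_pos_iff.mpr hk)]
  have hfactor : algebraMap 𝕜 A k + b = algebraMap 𝕜 A k * (1 - -(k⁻¹ • b)) := by
    rw [sub_neg_eq_add, mul_add, mul_one, ← Algebra.smul_def, smul_smul, mul_inv_cancel₀ hk,
      one_smul]
  rw [hfactor]
  exact ((isUnit_iff_ne_zero.mpr hk).map (algebraMap 𝕜 A)).mul (Units.oneSub _ hsmall).isUnit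

theorem isUnit_one_add_smul_of_norm_sub_smul_one_lt {A : Type*} [NormedRing A]
    [NormedAlgebra ℝ A] [CompleteSpace A] {a : A} {c : ℝ} (h : ‖a - c • (1 : A)‖ < 1 + c)
    {s : ℝ} (hs₀ : 0 ≤ s) (hs₁ : s ≤ 1) : IsUnit (1 + s • a) := by
  have hdecomp : 1 + s • a = algebraMap ℝ A (1 + c * s) + s • (a - c • (1 : A)) := by
    rw [Algebra.algebraMap_eq_smul_one, smul_sub, smul_smul]
    module
  have hnorm : ‖s • (a - c • (1 : A))‖ < ‖1 + c * s‖ := by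
    rw [norm_smul, Real.norm_of_nonneg hs₀]
    refine lt_of_lt_of_le ?_ (Real.le_norm_self _)
    nlinarith [mul_le_mul_of_nonneg_left h.le hs₀]
  rw [hdecomp]
  exact isUnit_algebraMap_add_of_norm_lt hnorm

/-- If `A` is a bounded operator on a real Banach space `X` and `c : ℝ` satisfies
`‖A - c • I‖ < 1 + c`, then `I + t² • A` is invertible for every `t ∈ [0,1]`. -/
theorem stmt0 {X : Type*} [NormedAddCommGroup X] [NormedSpace ℝ X] [CompleteSpace X]
    (A : X →L[ℝ] X) (c : ℝ)
    (h : ‖A - c • (1 : X →L[ℝ] X)‖ < 1 + c) :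
    ∀ t ∈ Set.Icc (0 : ℝ) 1, IsUnit ((1 : X →L[ℝ] X) + t ^ 2 • A) := by
  rintro t ⟨ht₀, ht₁⟩
  exact isUnit_one_add_smul_of_norm_sub_smul_one_lt h (sq_nonneg t) (pow_le_one₀ ht₀ ht₁)
end

section
/- Let W be a finite-dimensional real vector space and B₁, B₂ symmetric bilinear forms on W. Suppose that every subspace of W on which B₁ is negative definite has dimension at most m₁, and every subspace on which B₂ is negative definite has dimension at most m₂. Then every subspace of W on which B₁ + B₂ is negative definite has dimension at most m₁ + m₂. -/
/-!
In terms of the negative index `sigNeg` of a quadratic form (the maximal dimension of a negative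
definite subspace), the claim is `sigNeg (Q₁ + Q₂) ≤ sigNeg Q₁ + sigNeg Q₂`. By Sylvester's law
of inertia, `Q₁` is positive semidefinite on a subspace `P` of codimension `sigNeg Q₁`. If `N` is
negative definite for `Q₁ + Q₂`, then `Q₂` is negative definite on `N ⊓ P`, so
`dim N - sigNeg Q₁ ≤ dim (N ⊓ P) ≤ sigNeg Q₂`.
-/

open Module QuadraticMap QuadraticForm

namespace QuadraticForm

variable {𝕜 M : Type*} [Field 𝕜] [LinearOrder 𝕜] [IsStrictOrderedRing 𝕜]
  [AddCommGroup M] [Module 𝕜 M] {Q : QuadraticForm 𝕜 M}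

theorem negDef_restrict_iff {V : Submodule 𝕜 M} :
    ((-Q).restrict V).PosDef ↔ ∀ x ∈ V, x ≠ 0 → Q x < 0 := by
  simp [PosDef]

theorem sigNeg_le_of_forall_negDef_finrank_le [FiniteDimensional 𝕜 M] {m : ℕ}
    (h : ∀ V : Submodule 𝕜 M, (∀ x ∈ V, x ≠ 0 → Q x < 0) → finrank 𝕜 V ≤ m) :
    sigNeg Q ≤ m := by
  obtain ⟨V, hV, hVneg⟩ := exists_finrank_eq_sigNeg_and_negDef Q
  exact hV ▸ h V (negDef_restrict_iff.mp hVneg)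

variable [FiniteDimensional 𝕜 M]

-- The witness is a maximal positive definite subspace plus the radical.
theorem exists_nonneg_finrank_add_sigNeg_eq (Q : QuadraticForm 𝕜 M) :
    ∃ P : Submodule 𝕜 M, (∀ x ∈ P, 0 ≤ Q x) ∧ finrank 𝕜 P + sigNeg Q = finrank 𝕜 M := by
  obtain ⟨V, hV, hVpos⟩ := exists_finrank_eq_sigPos_and_posDef Q
  have hpos : ∀ x ∈ V, 0 ≤ Q x := fun x hx => (hVpos.nonneg ⟨x, hx⟩ :)
  have hdisj : V ⊓ Q.radical = ⊥ := by
    refine (Submodule.eq_bot_iff _).mpr fun x ⟨hxV, hxR⟩ => ?_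
    by_contra hx
    have := hVpos ⟨x, hxV⟩ (by simpa using hx)
    simp [(mem_radical_iff'.mp hxR).1] at this
  refine ⟨V ⊔ Q.radical, fun x hx => ?_, ?_⟩
  · obtain ⟨y, hy, z, hz, rfl⟩ := Submodule.mem_sup.mp hx
    rw [add_comm, (mem_radical_iff'.mp hz).2]
    exact hpos y hy
  · have := Submodule.finrank_sup_add_finrank_inf_eq V Q.radical
    rw [hdisj, finrank_bot, add_zero] at this
    rw [this, hV, ← sigPos_add_sigNeg_add_radical (Q := Q)]
    ring

theorem sigNeg_add_le (Q₁ Q₂ : QuadraticForm 𝕜 M) : sigNeg (Q₁ + Q₂) ≤ sigNeg Q₁ + sigNeg Q₂ := by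
  obtain ⟨N, hN, hNneg⟩ := exists_finrank_eq_sigNeg_and_negDef (Q₁ + Q₂)
  obtain ⟨P, hP, hPdim⟩ := exists_nonneg_finrank_add_sigNeg_eq Q₁
  have hNP : finrank 𝕜 (N ⊓ P : Submodule 𝕜 M) ≤ sigNeg Q₂ := by
    refine le_sigNeg_of_negDef Q₂ (negDef_restrict_iff.mpr fun x ⟨hxN, hxP⟩ hx => ?_)
    have := negDef_restrict_iff.mp hNneg x hxN hx
    have := hP x hxP
    simp only [add_apply] at *
    linarith
  have := Submodule.finrank_sup_add_finrank_inf_eq N P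
  have := Submodule.finrank_le (N ⊔ P)
  omega

end QuadraticForm

open LinearMap.BilinMap

theorem stmt1_general {W : Type*} [AddCommGroup W] [Module ℝ W] [FiniteDimensional ℝ W]
    (B₁ B₂ : W →ₗ[ℝ] W →ₗ[ℝ] ℝ)
    (m₁ m₂ : ℕ)
    (h₁ : ∀ V : Submodule ℝ W, (∀ x ∈ V, x ≠ 0 → B₁ x x < 0) → Module.finrank ℝ V ≤ m₁)
    (h₂ : ∀ V : Submodule ℝ W, (∀ x ∈ V, x ≠ 0 → B₂ x x < 0) → Module.finrank ℝ V ≤ m₂) :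
    ∀ V : Submodule ℝ W, (∀ x ∈ V, x ≠ 0 → (B₁ + B₂) x x < 0) →
      Module.finrank ℝ V ≤ m₁ + m₂ := by
  intro V hV
  calc finrank ℝ V ≤ sigNeg (toQuadraticMap (B₁ + B₂)) :=
        le_sigNeg_of_negDef _ (negDef_restrict_iff.mpr hV)
    _ = sigNeg (toQuadraticMap B₁ + toQuadraticMap B₂) := by rw [toQuadraticMap_add]
    _ ≤ sigNeg (toQuadraticMap B₁) + sigNeg (toQuadraticMap B₂) := sigNeg_add_le _ _
    _ ≤ m₁ + m₂ := add_le_add (sigNeg_le_of_forall_negDef_finrank_le h₁)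
        (sigNeg_le_of_forall_negDef_finrank_le h₂)

/-- If every subspace on which the symmetric bilinear form `B₁` is negative definite has
dimension at most `m₁`, and similarly for `B₂` with `m₂`, then every subspace on which
`B₁ + B₂` is negative definite has dimension at most `m₁ + m₂`. -/
theorem stmt1 {W : Type*} [AddCommGroup W] [Module ℝ W] [FiniteDimensional ℝ W]
    (B₁ B₂ : W →ₗ[ℝ] W →ₗ[ℝ] ℝ)
    (hB₁ : ∀ x y, B₁ x y = B₁ y x) (hB₂ : ∀ x y, B₂ x y = B₂ y x)
    (m₁ m₂ : ℕ)
    (h₁ : ∀ V : Submodule ℝ W, (∀ x ∈ V, x ≠ 0 → B₁ x x < 0) → Module.finrank ℝ V ≤ m₁)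
    (h₂ : ∀ V : Submodule ℝ W, (∀ x ∈ V, x ≠ 0 → B₂ x x < 0) → Module.finrank ℝ V ≤ m₂) :
    ∀ V : Submodule ℝ W, (∀ x ∈ V, x ≠ 0 → (B₁ + B₂) x x < 0) →
      Module.finrank ℝ V ≤ m₁ + m₂ :=
  stmt1_general B₁ B₂ m₁ m₂ h₁ h₂
end

section
/- Let W be a finite-dimensional real vector space and B₁, B₂ symmetric bilinear forms on W. Suppose that every subspace of W on which B₁ is negative semidefinite (i.e. B₁(x,x) ≤ 0 for all x in the subspace) has dimension at most m₁, and every subspace on which B₂ is negative semidefinite has dimension at most m₂. Then every subspace of W on which B₁ + B₂ is negative semidefinite has dimension at most m₁ + m₂. -/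
/-!
Diagonalise `B₁` on a subspace `V` where `B₁ + B₂` is negative semidefinite: `V` is spanned by a
subspace `P` on which `B₁ ≥ 0` and a subspace `N` on which `B₁ ≤ 0`. On `P` we get `B₂ ≤ -B₁ ≤ 0`,
so `dim P ≤ m₂`, while `dim N ≤ m₁`; hence `dim V ≤ dim P + dim N ≤ m₁ + m₂`.
-/

open Module

namespace QuadraticMap

section OrderedRing

variable {R : Type*} [CommRing R] [LinearOrder R] [IsStrictOrderedRing R]

lemma weightedSumSquares_nonneg_of_mem_spanSubset {ι : Type*} [Fintype ι] {w : ι → R}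
    {s : Set ι} (hs : ∀ i ∈ s, 0 ≤ w i) {x : ι → R} (hx : x ∈ Pi.spanSubset R s) :
    0 ≤ weightedSumSquares R w x := by
  rw [weightedSumSquares_apply]
  refine Finset.sum_nonneg fun i _ => ?_
  by_cases hi : i ∈ s
  · exact smul_nonneg (hs i hi) (mul_self_nonneg _)
  · simp [Pi.mem_spanSubset_iff.mp hx i hi]

lemma weightedSumSquares_nonpos_of_mem_spanSubset {ι : Type*} [Fintype ι] {w : ι → R}
    {s : Set ι} (hs : ∀ i ∈ s, w i ≤ 0) {x : ι → R} (hx : x ∈ Pi.spanSubset R s) :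
    weightedSumSquares R w x ≤ 0 := by
  have := weightedSumSquares_nonneg_of_mem_spanSubset (w := -w)
    (fun i hi => neg_nonneg.2 (hs i hi)) hx
  simpa [weightedSumSquares_apply] using this

end OrderedRing

variable {𝕜 : Type*} [Field 𝕜] [LinearOrder 𝕜] [IsStrictOrderedRing 𝕜]
variable {M : Type*} [AddCommGroup M] [Module 𝕜 M] [FiniteDimensional 𝕜 M]

theorem exists_sup_eq_top_nonneg_nonpos (Q : QuadraticForm 𝕜 M) :
    ∃ P N : Submodule 𝕜 M, P ⊔ N = ⊤ ∧ (∀ x ∈ P, 0 ≤ Q x) ∧ ∀ x ∈ N, Q x ≤ 0 := by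
  have : Invertible (2 : 𝕜) := invertibleOfNonzero two_ne_zero
  obtain ⟨w, ⟨e⟩⟩ := Q.equivalent_weightedSumSquares
  refine ⟨(Pi.spanSubset 𝕜 {i | 0 ≤ w i}).map e.symm.toLinearMap,
    (Pi.spanSubset 𝕜 {i | w i ≤ 0}).map e.symm.toLinearMap, ?_, ?_, ?_⟩
  · have hcover : {i | 0 ≤ w i} ∪ {i | w i ≤ 0} = Set.univ :=
      Set.eq_univ_of_forall fun i => le_total 0 (w i)
    rw [← Submodule.map_sup, Pi.spanSubset, Pi.spanSubset, ← Submodule.span_union,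
      ← Set.image_union, hcover, Set.image_univ, Basis.span_eq, Submodule.map_top,
      LinearEquiv.range]
  · rintro _ ⟨y, hy, rfl⟩
    show 0 ≤ Q (e.symm y)
    rw [e.symm.map_app]
    exact weightedSumSquares_nonneg_of_mem_spanSubset (fun i hi => hi) hy
  · rintro _ ⟨y, hy, rfl⟩
    show Q (e.symm y) ≤ 0
    rw [e.symm.map_app]
    exact weightedSumSquares_nonpos_of_mem_spanSubset (fun i hi => hi) hy

theorem finrank_le_add_of_add_nonpos {Q₁ Q₂ : QuadraticForm 𝕜 M} {m₁ m₂ : ℕ}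
    (h₁ : ∀ V : Submodule 𝕜 M, (∀ x ∈ V, Q₁ x ≤ 0) → finrank 𝕜 V ≤ m₁)
    (h₂ : ∀ V : Submodule 𝕜 M, (∀ x ∈ V, Q₂ x ≤ 0) → finrank 𝕜 V ≤ m₂)
    {V : Submodule 𝕜 M} (hV : ∀ x ∈ V, Q₁ x + Q₂ x ≤ 0) :
    finrank 𝕜 V ≤ m₁ + m₂ := by
  obtain ⟨P, N, hPN, hP, hN⟩ := (Q₁.restrict V).exists_sup_eq_top_nonneg_nonpos
  have hP₂ : finrank 𝕜 P ≤ m₂ := by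
    rw [← Submodule.finrank_map_subtype_eq]
    refine h₂ _ ?_
    rintro _ ⟨y, hy, rfl⟩
    have hQ₁ : 0 ≤ Q₁ y := hP y hy
    show Q₂ y ≤ 0
    linarith [hV y y.2]
  have hN₁ : finrank 𝕜 N ≤ m₁ := by
    rw [← Submodule.finrank_map_subtype_eq]
    exact h₁ _ fun _ ⟨y, hy, hx⟩ => hx ▸ hN y hy
  calc finrank 𝕜 V = finrank 𝕜 (P ⊔ N : Submodule 𝕜 V) := by rw [hPN, finrank_top]
    _ ≤ finrank 𝕜 P + finrank 𝕜 N := Submodule.finrank_add_le_finrank_add_finrank P N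
    _ ≤ m₁ + m₂ := by omega

end QuadraticMap

theorem stmt2_general {W : Type*} [AddCommGroup W] [Module ℝ W] [FiniteDimensional ℝ W]
    (B₁ B₂ : W →ₗ[ℝ] W →ₗ[ℝ] ℝ)
    (m₁ m₂ : ℕ)
    (h₁ : ∀ V : Submodule ℝ W, (∀ x ∈ V, B₁ x x ≤ 0) → Module.finrank ℝ V ≤ m₁)
    (h₂ : ∀ V : Submodule ℝ W, (∀ x ∈ V, B₂ x x ≤ 0) → Module.finrank ℝ V ≤ m₂) :
    ∀ V : Submodule ℝ W, (∀ x ∈ V, (B₁ + B₂) x x ≤ 0) →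
      Module.finrank ℝ V ≤ m₁ + m₂ := by
  intro V hV
  exact QuadraticMap.finrank_le_add_of_add_nonpos (Q₁ := LinearMap.BilinMap.toQuadraticMap B₁)
    (Q₂ := LinearMap.BilinMap.toQuadraticMap B₂) h₁ h₂ hV

/-- If every subspace on which the symmetric bilinear form `B₁` is negative semidefinite has
dimension at most `m₁`, and similarly for `B₂` with `m₂`, then every subspace on which
`B₁ + B₂` is negative semidefinite has dimension at most `m₁ + m₂`. -/
theorem stmt2 {W : Type*} [AddCommGroup W] [Module ℝ W] [FiniteDimensional ℝ W]
    (B₁ B₂ : W →ₗ[ℝ] W →ₗ[ℝ] ℝ)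
    (hB₁ : ∀ x y, B₁ x y = B₁ y x) (hB₂ : ∀ x y, B₂ x y = B₂ y x)
    (m₁ m₂ : ℕ)
    (h₁ : ∀ V : Submodule ℝ W, (∀ x ∈ V, B₁ x x ≤ 0) → Module.finrank ℝ V ≤ m₁)
    (h₂ : ∀ V : Submodule ℝ W, (∀ x ∈ V, B₂ x x ≤ 0) → Module.finrank ℝ V ≤ m₂) :
    ∀ V : Submodule ℝ W, (∀ x ∈ V, (B₁ + B₂) x x ≤ 0) →
      Module.finrank ℝ V ≤ m₁ + m₂ :=
  stmt2_general B₁ B₂ m₁ m₂ h₁ h₂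
end

section
/- For every t ∈ [0,1], the subspace β(t) = {(x, t·φ, t·x, φ) : x ∈ E, φ ∈ E*} is a Lagrangian subspace of (ℋ⊞, ω⊞): ω⊞ vanishes identically on β(t) × β(t), and every z ∈ ℋ⊞ satisfying ω⊞(z, w) = 0 for all w ∈ β(t) belongs to β(t). -/
noncomputable section

/-- The symplectic form `ω` on `ℋ = E × E*`, `ω((x,φ),(y,ψ)) = ψ(x) − φ(y)`. -/
def omegaH {E : Type*} [NormedAddCommGroup E] [InnerProductSpace ℝ E]
    (p q : E × StrongDual ℝ E) : ℝ := q.2 p.1 - p.2 q.1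

/-- The symplectic form `ω⊞ = ω ⊕ (−ω)` on the doubled space `ℋ⊞ = ℋ × ℋ`. -/
def omegaBp {E : Type*} [NormedAddCommGroup E] [InnerProductSpace ℝ E]
    (z w : (E × StrongDual ℝ E) × (E × StrongDual ℝ E)) : ℝ :=
  omegaH z.1 w.1 - omegaH z.2 w.2

/-- The family of boundary-condition subspaces `β(t) = {(x, t·φ, t·x, φ)}` of `ℋ⊞`. -/
def betaSet (E : Type*) [NormedAddCommGroup E] [InnerProductSpace ℝ E] (t : ℝ) :
    Set ((E × StrongDual ℝ E) × (E × StrongDual ℝ E)) :=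
  {z | ∃ (x : E) (φ : StrongDual ℝ E), z = ((x, t • φ), (t • x, φ))}

/-!
Pairing `(a, α, b, β)` with the generic element `(x, t•φ, t•x, φ)` of `β(t)` gives
`φ(t•a − b) − (α − t•β)(x)`. This vanishes on `β(t)` itself, and if it vanishes for all `x, φ`
then `α = t•β` and, since the dual separates points, `b = t•a`.
-/

section

variable {E : Type*} [NormedAddCommGroup E] [InnerProductSpace ℝ E]

lemma omegaBp_apply_betaSet (z : (E × StrongDual ℝ E) × (E × StrongDual ℝ E)) (t : ℝ)
    (x : E) (φ : StrongDual ℝ E) :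
    omegaBp z ((x, t • φ), (t • x, φ)) = φ (t • z.1.1 - z.2.1) - (z.1.2 - t • z.2.2) x := by
  simp only [omegaBp, omegaH, map_sub, map_smul, smul_eq_mul, sub_apply, smul_apply]
  ring

lemma mem_betaSet_iff {t : ℝ} {z : (E × StrongDual ℝ E) × (E × StrongDual ℝ E)} :
    z ∈ betaSet E t ↔ z.1.2 = t • z.2.2 ∧ z.2.1 = t • z.1.1 := by
  constructor
  · rintro ⟨x, φ, rfl⟩
    exact ⟨rfl, rfl⟩
  · obtain ⟨⟨a, α⟩, ⟨b, β⟩⟩ := z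
    rintro ⟨hα, hb⟩
    exact ⟨a, β, by simp_all⟩

lemma betaSet_isotropic (t : ℝ) : ∀ z ∈ betaSet E t, ∀ w ∈ betaSet E t, omegaBp z w = 0 := by
  rintro z hz w ⟨x, φ, rfl⟩
  obtain ⟨hα, hb⟩ := mem_betaSet_iff.mp hz
  rw [omegaBp_apply_betaSet, hα, hb]
  simp

lemma betaSet_coisotropic (t : ℝ) (z : (E × StrongDual ℝ E) × (E × StrongDual ℝ E))
    (hz : ∀ w ∈ betaSet E t, omegaBp z w = 0) : z ∈ betaSet E t := by
  have h (x : E) (φ : StrongDual ℝ E) : φ (t • z.1.1 - z.2.1) - (z.1.2 - t • z.2.2) x = 0 := by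
    rw [← omegaBp_apply_betaSet]
    exact hz _ ⟨x, φ, rfl⟩
  have hα : z.1.2 - t • z.2.2 = 0 := ContinuousLinearMap.ext fun x => by
    simpa only [zero_apply, zero_sub, neg_eq_zero] using h x 0
  have hb : t • z.1.1 - z.2.1 = 0 := SeparatingDual.eq_zero_of_forall_dual_eq_zero fun φ => by
    simpa only [map_zero, sub_zero] using h 0 φ
  exact mem_betaSet_iff.mpr ⟨sub_eq_zero.mp hα, (sub_eq_zero.mp hb).symm⟩

end

theorem stmt4_general {E : Type*} [NormedAddCommGroup E] [InnerProductSpace ℝ E] :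
    ∀ t ∈ Set.Icc (0 : ℝ) 1,
      (∀ z ∈ betaSet E t, ∀ w ∈ betaSet E t, omegaBp z w = 0) ∧
      (∀ z : (E × StrongDual ℝ E) × (E × StrongDual ℝ E),
        (∀ w ∈ betaSet E t, omegaBp z w = 0) → z ∈ betaSet E t) :=
  fun t _ => ⟨betaSet_isotropic t, betaSet_coisotropic t⟩

/-- For every `t ∈ [0,1]`, the subspace `β(t) = {(x, t·φ, t·x, φ)}` is a Lagrangian
subspace of `(ℋ⊞, ω⊞)`: it is isotropic and coisotropic. -/
theorem stmt4 {E : Type*} [NormedAddCommGroup E] [InnerProductSpace ℝ E] [CompleteSpace E] :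
    ∀ t ∈ Set.Icc (0 : ℝ) 1,
      (∀ z ∈ betaSet E t, ∀ w ∈ betaSet E t, omegaBp z w = 0) ∧
      (∀ z : (E × StrongDual ℝ E) × (E × StrongDual ℝ E),
        (∀ w ∈ betaSet E t, omegaBp z w = 0) → z ∈ betaSet E t) :=
  stmt4_general
end
end

section
/- Let E be a real Hilbert space with topological dual E*, and let 𝒥 : E → E* be a bounded symmetric linear map ((𝒥x)(y) = (𝒥y)(x) for all x, y). Let x : ℝ → E be differentiable at t₀ with sin t₀ ≠ 0, and define z(t) = (x(t), −(cot t)·𝒥(x(t))) ∈ E × E* for t near t₀. Then z is differentiable at t₀ and ω(z(t₀), z′(t₀)) = (1/sin²t₀)·(𝒥(x(t₀)))(x(t₀)), where ω((x,φ),(y,ψ)) = ψ(x) − φ(y). -/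
noncomputable section

lemma Real.hasDerivAt_cot {t : ℝ} (hs : Real.sin t ≠ 0) :
    HasDerivAt Real.cot (-(1 / Real.sin t ^ 2)) t := by
  have hquot := (Real.hasDerivAt_cos t).div (Real.hasDerivAt_sin t) hs
  rw [show Real.cos / Real.sin = Real.cot from
    funext fun s => (Real.cot_eq_cos_div_sin s).symm] at hquot
  refine hquot.congr_deriv ?_
  rw [neg_div', div_left_inj' (pow_ne_zero 2 hs)]
  linear_combination -Real.sin_sq_add_cos_sq t

section RobinPath

variable {E : Type*} [NormedAddCommGroup E] [InnerProductSpace ℝ E]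
  (J : E →L[ℝ] StrongDual ℝ E) {c : ℝ → ℝ} {c' : ℝ} {x : ℝ → E} {x' : E} {t₀ : ℝ}

lemma hasDerivAt_prodMk_neg_smul (hc : HasDerivAt c c' t₀) (hx : HasDerivAt x x' t₀) :
    HasDerivAt (fun t => ((x t, -(c t • J (x t))) : E × StrongDual ℝ E))
      (x', -(c t₀ • J x' + c' • J (x t₀))) t₀ :=
  hx.prodMk (hc.smul (J.hasFDerivAt.comp_hasDerivAt t₀ hx)).neg

/-- The terms `c (J u u' - J u' u)` cancel by symmetry of `J`. -/
lemma omegaH_neg_smul_graph (hJ : ∀ u v : E, J u v = J v u) (c c' : ℝ) (u u' : E) :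
    omegaH (u, -(c • J u)) (u', -(c • J u' + c' • J u)) = -c' * J u u := by
  simp only [omegaH, neg_apply, add_apply, smul_apply, smul_eq_mul, hJ u' u]
  ring

end RobinPath

theorem stmt12_general {E : Type*} [NormedAddCommGroup E] [InnerProductSpace ℝ E]
    (J : E →L[ℝ] StrongDual ℝ E) (hJ : ∀ x y : E, J x y = J y x)
    (x : ℝ → E) (t₀ : ℝ) (hx : DifferentiableAt ℝ x t₀) (hs : Real.sin t₀ ≠ 0) :
    DifferentiableAt ℝ
      (fun t => ((x t, -(Real.cot t • J (x t))) : E × StrongDual ℝ E)) t₀ ∧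
    omegaH ((x t₀, -(Real.cot t₀ • J (x t₀))))
        (deriv (fun t => ((x t, -(Real.cot t • J (x t))) : E × StrongDual ℝ E)) t₀)
      = (1 / Real.sin t₀ ^ 2) * J (x t₀) (x t₀) := by
  have hz := hasDerivAt_prodMk_neg_smul J (Real.hasDerivAt_cot hs) hx.hasDerivAt
  refine ⟨hz.differentiableAt, ?_⟩
  rw [hz.deriv, omegaH_neg_smul_graph J hJ, neg_neg]

/-- Crossing form computation along the path of Robin boundary conditions: if `x : ℝ → E`
is differentiable at `t₀`, `sin t₀ ≠ 0`, and `z(t) = (x(t), −(cot t)·𝒥(x(t)))`, then `z` is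
differentiable at `t₀` and `ω(z(t₀), z′(t₀)) = (1/sin²t₀)·(𝒥(x(t₀)))(x(t₀))`. -/
theorem stmt12 {E : Type*} [NormedAddCommGroup E] [InnerProductSpace ℝ E] [CompleteSpace E]
    (J : E →L[ℝ] StrongDual ℝ E) (hJ : ∀ x y : E, J x y = J y x)
    (x : ℝ → E) (t₀ : ℝ) (hx : DifferentiableAt ℝ x t₀) (hs : Real.sin t₀ ≠ 0) :
    DifferentiableAt ℝ
      (fun t => ((x t, -(Real.cot t • J (x t))) : E × StrongDual ℝ E)) t₀ ∧
    omegaH ((x t₀, -(Real.cot t₀ • J (x t₀))))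
        (deriv (fun t => ((x t, -(Real.cot t • J (x t))) : E × StrongDual ℝ E)) t₀)
      = (1 / Real.sin t₀ ^ 2) * J (x t₀) (x t₀) :=
  stmt12_general J hJ x t₀ hx hs
end
end
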